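/- Let P ≤ Q be real numbers with P ≥ 2, let r be a natural number, and set 𝑃 = Σ_{P ≤ p < Q} 1/p (sum over primes). Then Σ_{m,n} (r!)² g(m) g(n) / lcm(m,n) ≤ 2^r · r! · 𝑃^r · exp(𝑃), where the sum runs over pairs of positive integers m, n all of whose prime factors p satisfy P ≤ p < Q and with Ω(m) = Ω(n) = r. -/

import Mathlib

open scoped BigOperators
open ArithmeticFunction
open scoped ArithmeticFunction.Omega
open scoped Classical

noncomputable section

/-- The multiplicative function `g` with `g(p^r) = 1/r!`. -/
def gfun (n : ℕ) : ℝ := ∏ p ∈ n.primeFactors, (1:ℝ)/(Nat.factorial (n.factorization p))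

/-- `𝑃 = Σ_{P ≤ p < Q} 1/p`, the sum over primes `p` in `[P, Q)`. -/
def primeRecipSum (P Q : ℝ) : ℝ :=
  ∑ p ∈ (Finset.range (⌈Q⌉₊ + 1)).filter (fun p : ℕ => p.Prime ∧ P ≤ (p:ℝ) ∧ (p:ℝ) < Q),
    (1:ℝ)/p



lemma gfun_pos (n : ℕ) : 0 < gfun n :=
  Finset.prod_pos fun p _ => by positivity

lemma gfun_le_one (n : ℕ) : gfun n ≤ 1 := by
  apply Finset.prod_le_one
  · intro p _; positivity
  · intro p _
    rw [div_le_one (by positivity)]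
    exact_mod_cast Nat.one_le_iff_ne_zero.2 (Nat.factorial_ne_zero _)

lemma gfun_one : gfun 1 = 1 := by simp [gfun]

lemma gfun_eq_prod_subset {n : ℕ} {t : Finset ℕ} (h : n.primeFactors ⊆ t) :
    gfun n = ∏ p ∈ t, (1:ℝ)/(Nat.factorial (n.factorization p)) := by
  rw [gfun]
  apply Finset.prod_subset h
  intro p _ hp
  have : n.factorization p = 0 := by
    rw [← Nat.support_factorization] at hp
    exact Finsupp.notMem_support_iff.1 hp
  simp [this]

lemma omega_eq_sum (n : ℕ) : Ω n = ∑ p ∈ n.primeFactors, n.factorization p := by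
  rw [cardFactors_apply]
  have h := Multiset.toFinset_sum_count_eq (↑n.primeFactorsList : Multiset ℕ)
  simp only [Multiset.coe_count, Multiset.coe_card, List.toFinset_coe] at h
  have h2 : n.primeFactors = n.primeFactorsList.toFinset := rfl
  rw [h2, ← h]
  exact Finset.sum_congr rfl fun p _ => Nat.primeFactorsList_count_eq

lemma omega_pos_ne (n : ℕ) (hn : n ≠ 0) (h1 : n ≠ 1) : Ω n ≠ 0 := by
  obtain ⟨p, pp, pd⟩ := Nat.exists_prime_and_dvd h1
  have hp : p ∈ n.primeFactors := Nat.mem_primeFactors.2 ⟨pp, pd, hn⟩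
  rw [omega_eq_sum]
  intro h0
  have h1 : 1 ≤ n.factorization p := by
    rw [← Nat.support_factorization] at hp
    exact Nat.one_le_iff_ne_zero.2 (Finsupp.mem_support_iff.1 hp)
  have := (Finset.sum_eq_zero_iff.1 h0) p hp
  omega

lemma gfun_mul_le (a b : ℕ) (ha : a ≠ 0) (hb : b ≠ 0) :
    gfun (a * b) ≤ gfun a * gfun b := by
  have hpf : (a*b).primeFactors = a.primeFactors ∪ b.primeFactors :=
    Nat.primeFactors_mul ha hb
  rw [gfun_eq_prod_subset (t := a.primeFactors ∪ b.primeFactors) hpf.le,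
    gfun_eq_prod_subset (t := a.primeFactors ∪ b.primeFactors) Finset.subset_union_left,
    gfun_eq_prod_subset (t := a.primeFactors ∪ b.primeFactors) Finset.subset_union_right,
    ← Finset.prod_mul_distrib]
  apply Finset.prod_le_prod
  · intro p _; positivity
  · intro p _
    rw [Nat.factorization_mul ha hb, Finsupp.add_apply, div_mul_div_comm, one_mul]
    rw [div_le_div_iff₀ (by positivity) (by positivity), one_mul, one_mul]
    exact_mod_cast Nat.le_of_dvd (Nat.factorial_pos _)
      (Nat.factorial_mul_factorial_dvd_factorial_add _ _)



lemma omega_dvd_le {d n : ℕ} (hd : d ∣ n) (hn : n ≠ 0) : Ω d ≤ Ω n := by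
  obtain ⟨c, rfl⟩ := hd
  have hd0 : d ≠ 0 := by rintro rfl; simp at hn
  have hc0 : c ≠ 0 := by rintro rfl; simp at hn
  rw [cardFactors_mul hd0 hc0]; omega

lemma primeFactors_div_subset {n p : ℕ} (hpn : p ∣ n) (hn : n ≠ 0) :
    (n / p).primeFactors ⊆ n.primeFactors :=
  Nat.primeFactors_mono (Nat.div_dvd_of_dvd hpn) hn

lemma gfun_div_prime {n p : ℕ} (hp : p.Prime) (hpn : p ∣ n) (hn : n ≠ 0) :
    gfun (n / p) = (n.factorization p : ℝ) * gfun n := by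
  have hpf : p ∈ n.primeFactors := Nat.mem_primeFactors.2 ⟨hp, hpn, hn⟩
  have ha : 1 ≤ n.factorization p := by
    rw [← Nat.support_factorization] at hpf
    exact Nat.one_le_iff_ne_zero.2 (Finsupp.mem_support_iff.1 hpf)
  have hfac : (n / p).factorization = n.factorization - Finsupp.single p 1 := by
    rw [Nat.factorization_div hpn, hp.factorization]
  rw [gfun_eq_prod_subset (primeFactors_div_subset hpn hn), gfun,
    ← Finset.mul_prod_erase _ _ hpf, ← Finset.mul_prod_erase _ _ hpf, ← mul_assoc]
  have hrest : ∀ q ∈ n.primeFactors.erase p,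
      (1:ℝ)/(Nat.factorial ((n/p).factorization q)) = 1/(Nat.factorial (n.factorization q)) := by
    intro q hq
    have hqp : q ≠ p := Finset.ne_of_mem_erase hq
    rw [hfac, Finsupp.tsub_apply, Finsupp.single_apply, if_neg (Ne.symm hqp), Nat.sub_zero]
  rw [Finset.prod_congr rfl hrest]
  congr 1
  have hap : (n/p).factorization p = n.factorization p - 1 := by
    rw [hfac, Finsupp.tsub_apply, Finsupp.single_apply, if_pos rfl]
  rw [hap]
  have hfact : (n.factorization p).factorial
      = n.factorization p * (n.factorization p - 1).factorial := by
    conv_lhs => rw [show n.factorization p = (n.factorization p - 1) + 1 by omega]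
    rw [Nat.factorial_succ]
    congr 1; omega
  rw [hfact]
  have h1 : ((n.factorization p - 1).factorial : ℝ) ≠ 0 := by
    exact_mod_cast Nat.factorial_ne_zero _
  have h2 : (n.factorization p : ℝ) ≠ 0 := by
    have : 0 < n.factorization p := ha
    exact_mod_cast this.ne'
  push_cast
  field_simp

lemma sum_gfun_div {n : ℕ} (hn : n ≠ 0) :
    ∑ p ∈ n.primeFactors, gfun (n / p) = (Ω n : ℝ) * gfun n := by
  have : ∀ p ∈ n.primeFactors, gfun (n/p) = (n.factorization p : ℝ) * gfun n := by
    intro p hp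
    have h := Nat.mem_primeFactors.1 hp
    exact gfun_div_prime h.1 h.2.1 hn
  rw [Finset.sum_congr rfl this, ← Finset.sum_mul, omega_eq_sum]
  push_cast
  ring

lemma le_pow_omega {B : ℕ} : ∀ n : ℕ, 0 < n → (∀ p ∈ n.primeFactors, p ≤ B) → n ≤ B ^ (Ω n) := by
  intro n
  induction n using Nat.strong_induction_on with
  | _ n ih =>
    intro hn hB
    rcases eq_or_ne n 1 with rfl | h1
    · simp
    · have h2 : 2 ≤ n := by omega
      set p := n.minFac with hp
      have pp : p.Prime := Nat.minFac_prime h1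
      have pd : p ∣ n := Nat.minFac_dvd n
      have hpf : p ∈ n.primeFactors := Nat.mem_primeFactors.2 ⟨pp, pd, by omega⟩
      have hq : n / p < n := Nat.div_lt_self hn pp.one_lt
      have hq0 : 0 < n / p := Nat.div_pos (Nat.le_of_dvd hn pd) pp.pos
      have hOm : Ω n = 1 + Ω (n / p) := by
        conv_lhs => rw [← Nat.div_mul_cancel pd]
        rw [cardFactors_mul (by omega) pp.ne_zero, cardFactors_apply_prime pp]
        omega
      have hsub := primeFactors_div_subset pd (by omega)
      have := ih (n/p) hq hq0 (fun q hqm => hB q (hsub hqm))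
      calc n = p * (n / p) := (Nat.mul_div_cancel' pd).symm
        _ ≤ B * B ^ (Ω (n/p)) := Nat.mul_le_mul (hB p hpf) this
        _ = B ^ (Ω n) := by rw [hOm, pow_add, pow_one]



lemma omega_div_prime {n p : ℕ} (hp : p.Prime) (hpn : p ∣ n) (hn : n ≠ 0) :
    Ω n = Ω (n / p) + 1 := by
  have hq0 : n / p ≠ 0 := (Nat.div_pos (Nat.le_of_dvd (Nat.pos_of_ne_zero hn) hpn) hp.pos).ne'
  conv_lhs => rw [← Nat.div_mul_cancel hpn]
  rw [cardFactors_mul hq0 hp.ne_zero, cardFactors_apply_prime hp]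

def Aset (S : Finset ℕ) (B j : ℕ) : Finset ℕ :=
  (Finset.range (B^j + 1)).filter (fun n => 0 < n ∧ n.primeFactors ⊆ S ∧ Ω n = j)

def Dset (S : Finset ℕ) (B r : ℕ) : Finset ℕ :=
  (Finset.range (B^r + 1)).filter (fun d => 0 < d ∧ d.primeFactors ⊆ S ∧ Ω d ≤ r)

lemma mem_Aset {S : Finset ℕ} {B j n : ℕ} (hSB : ∀ p ∈ S, p ≤ B) :
    n ∈ Aset S B j ↔ 0 < n ∧ n.primeFactors ⊆ S ∧ Ω n = j := by
  rw [Aset, Finset.mem_filter, Finset.mem_range]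
  constructor
  · rintro ⟨-, h⟩; exact h
  · rintro ⟨h1, h2, h3⟩
    refine ⟨?_, h1, h2, h3⟩
    have := le_pow_omega n h1 (fun p hp => hSB p (h2 hp))
    rw [h3] at this; omega

lemma Aset_zero {S : Finset ℕ} {B : ℕ} (hSB : ∀ p ∈ S, p ≤ B) : Aset S B 0 = {1} := by
  ext n
  rw [mem_Aset hSB, Finset.mem_singleton]
  constructor
  · rintro ⟨h1, h2, h3⟩
    by_contra h
    exact omega_pos_ne n h1.ne' h h3
  · rintro rfl; simp

lemma sum_Aset_le {S : Finset ℕ} {B : ℕ} (hSp : ∀ p ∈ S, p.Prime)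
    (hSB : ∀ p ∈ S, p ≤ B) (j : ℕ) :
    ∑ n ∈ Aset S B j, gfun n / n ≤ (∑ p ∈ S, (1:ℝ)/p)^j / (Nat.factorial j) := by
  induction j with
  | zero => rw [Aset_zero hSB]; simp [gfun_one]
  | succ j ih =>
    set E := ∑ p ∈ S, (1:ℝ)/p with hE
    have hE0 : 0 ≤ E := Finset.sum_nonneg fun p _ => by positivity
    have key : ((j:ℝ)+1) * ∑ n ∈ Aset S B (j+1), gfun n / n ≤ E * (E^j / (Nat.factorial j)) := by
      have step1 : ((j:ℝ)+1) * ∑ n ∈ Aset S B (j+1), gfun n / n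
          = ∑ m ∈ Aset S B (j+1), ∑ p ∈ m.primeFactors, gfun (m/p) / m := by
        rw [Finset.mul_sum]
        refine Finset.sum_congr rfl fun m hm => ?_
        obtain ⟨hm0, hmS, hmΩ⟩ := (mem_Aset hSB).1 hm
        rw [← Finset.sum_div, sum_gfun_div hm0.ne', hmΩ]
        push_cast; ring
      rw [step1]
      set f : ℕ × ℕ → ℝ := fun pn => gfun pn.2 / (pn.1 * pn.2) with hf
      have step2 : ∑ m ∈ Aset S B (j+1), ∑ p ∈ m.primeFactors, gfun (m/p) / m
          = ∑ x ∈ (Aset S B (j+1)).sigma (fun m => m.primeFactors), f (x.2, x.1 / x.2) := by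
        rw [Finset.sum_sigma]
        refine Finset.sum_congr rfl fun m hm => Finset.sum_congr rfl fun p hp => ?_
        have hpd : p ∣ m := (Nat.mem_primeFactors.1 hp).2.1
        have hm' : (m:ℝ) = (p:ℝ) * ((m/p : ℕ):ℝ) := by
          rw [← Nat.cast_mul, Nat.mul_div_cancel' hpd]
        rw [hf]
        simp only
        rw [hm']
      rw [step2]
      set e : (Σ _ : ℕ, ℕ) → ℕ × ℕ := fun x => (x.2, x.1 / x.2) with he
      have hinj : ∀ x ∈ (Aset S B (j+1)).sigma (fun m => m.primeFactors),
          ∀ y ∈ (Aset S B (j+1)).sigma (fun m => m.primeFactors), e x = e y → x = y := by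
        rintro ⟨m, p⟩ hx ⟨m', p'⟩ hy hxy
        rw [Finset.mem_sigma] at hx hy
        have hpd : p ∣ m := (Nat.mem_primeFactors.1 hx.2).2.1
        have hpd' : p' ∣ m' := (Nat.mem_primeFactors.1 hy.2).2.1
        rw [he] at hxy
        simp only [Prod.mk.injEq] at hxy
        obtain ⟨h1, h2⟩ := hxy
        subst h1
        have : m = m' := by
          conv_lhs => rw [← Nat.div_mul_cancel hpd]
          conv_rhs => rw [← Nat.div_mul_cancel hpd']
          rw [h2]
        subst this
        rfl
      have step3 : ∑ x ∈ (Aset S B (j+1)).sigma (fun m => m.primeFactors), f (e x)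
          = ∑ y ∈ ((Aset S B (j+1)).sigma (fun m => m.primeFactors)).image e, f y :=
        (Finset.sum_image hinj).symm
      have hsub : ((Aset S B (j+1)).sigma (fun m => m.primeFactors)).image e
          ⊆ S ×ˢ Aset S B j := by
        intro y hy
        rw [Finset.mem_image] at hy
        obtain ⟨⟨m, p⟩, hx, rfl⟩ := hy
        simp only [Finset.mem_sigma] at hx
        obtain ⟨hm, hp⟩ := hx
        obtain ⟨hm0, hmS, hmΩ⟩ := (mem_Aset hSB).1 hm
        obtain ⟨pp, hpd, -⟩ := Nat.mem_primeFactors.1 hp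
        rw [Finset.mem_product]
        constructor
        · exact hmS hp
        · rw [mem_Aset hSB]
          refine ⟨Nat.div_pos (Nat.le_of_dvd hm0 hpd) pp.pos, ?_, ?_⟩
          · exact fun q hq => hmS (primeFactors_div_subset hpd hm0.ne' hq)
          · show Ω (m / p) = j
            have := omega_div_prime pp hpd hm0.ne'
            omega
      have step4 : ∑ y ∈ ((Aset S B (j+1)).sigma (fun m => m.primeFactors)).image e, f y
          ≤ ∑ y ∈ S ×ˢ Aset S B j, f y := by
        apply Finset.sum_le_sum_of_subset_of_nonneg hsub
        intro pn hpn _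
        rw [Finset.mem_product] at hpn
        have hp0 : 0 < pn.1 := (hSp _ hpn.1).pos
        have hn0 : 0 < pn.2 := ((mem_Aset hSB).1 hpn.2).1
        rw [hf]
        have := gfun_pos pn.2
        positivity
      have step5 : ∑ y ∈ S ×ˢ Aset S B j, f y = E * ∑ n ∈ Aset S B j, gfun n / n := by
        rw [Finset.sum_product, hE, Finset.sum_mul]
        refine Finset.sum_congr rfl fun p hp => ?_
        rw [Finset.mul_sum]
        refine Finset.sum_congr rfl fun n hn => ?_
        have hp0 : (0:ℝ) < p := by exact_mod_cast (hSp p hp).pos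
        have hn0 : 0 < n := ((mem_Aset hSB).1 hn).1
        have hn0' : (0:ℝ) < n := by exact_mod_cast hn0
        rw [hf]
        push_cast
        field_simp
      calc ∑ x ∈ (Aset S B (j+1)).sigma (fun m => m.primeFactors), f (x.2, x.1 / x.2)
          = ∑ y ∈ ((Aset S B (j+1)).sigma (fun m => m.primeFactors)).image e, f y := step3
        _ ≤ ∑ y ∈ S ×ˢ Aset S B j, f y := step4
        _ = E * ∑ n ∈ Aset S B j, gfun n / n := step5
        _ ≤ E * (E^j / (Nat.factorial j)) := by
            apply mul_le_mul_of_nonneg_left ih hE0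
    have hj1 : (0:ℝ) < (j:ℝ) + 1 := by positivity
    rw [← le_div_iff₀' hj1] at key
    refine key.trans ?_
    rw [Nat.factorial_succ]
    have hfac : (Nat.factorial j : ℝ) ≠ 0 := by exact_mod_cast (Nat.factorial_ne_zero j)
    push_cast
    apply le_of_eq
    field_simp
    ring


lemma mem_Dset {S : Finset ℕ} {B r d : ℕ} (hSB : ∀ p ∈ S, p ≤ B) (hB : 1 ≤ B) :
    d ∈ Dset S B r ↔ 0 < d ∧ d.primeFactors ⊆ S ∧ Ω d ≤ r := by
  rw [Dset, Finset.mem_filter, Finset.mem_range]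
  constructor
  · rintro ⟨-, h⟩; exact h
  · rintro ⟨h1, h2, h3⟩
    refine ⟨?_, h1, h2, h3⟩
    have h4 := le_pow_omega d h1 (fun p hp => hSB p (h2 hp))
    have h5 : B ^ (Ω d) ≤ B ^ r := Nat.pow_le_pow_right hB h3
    omega

lemma Dset_filter_eq {S : Finset ℕ} {B r j : ℕ} (hSB : ∀ p ∈ S, p ≤ B) (hB : 1 ≤ B)
    (hjr : j ≤ r) :
    (Dset S B r).filter (fun d => Ω d = j) = Aset S B j := by
  ext d
  rw [Finset.mem_filter, mem_Dset hSB hB, mem_Aset hSB]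
  constructor
  · rintro ⟨⟨h1, h2, -⟩, h4⟩; exact ⟨h1, h2, h4⟩
  · rintro ⟨h1, h2, h3⟩; exact ⟨⟨h1, h2, h3 ▸ hjr⟩, h3⟩

lemma divisors_gcd_eq {B r m n : ℕ} {SS : Finset ℕ} (hSB : ∀ p ∈ SS, p ≤ B) (hB : 1 ≤ B)
    (hm : m ∈ Aset SS B r) (hn : n ∈ Aset SS B r) :
    (Nat.gcd m n).divisors = (Dset SS B r).filter (fun d => d ∣ m ∧ d ∣ n) := by
  obtain ⟨hm0, hmS, hmΩ⟩ := (mem_Aset hSB).1 hm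
  obtain ⟨hn0, -, -⟩ := (mem_Aset hSB).1 hn
  ext d
  rw [Nat.mem_divisors, Finset.mem_filter, mem_Dset hSB hB]
  constructor
  · rintro ⟨hd, hg⟩
    have hdm : d ∣ m := hd.trans (Nat.gcd_dvd_left m n)
    have hdn : d ∣ n := hd.trans (Nat.gcd_dvd_right m n)
    have hd0 : 0 < d := Nat.pos_of_ne_zero (fun h => by subst h; exact hm0.ne' (Nat.eq_zero_of_zero_dvd hdm))
    exact ⟨⟨hd0, fun p hp => hmS (Nat.primeFactors_mono hdm hm0.ne' hp),
      hmΩ ▸ omega_dvd_le hdm hm0.ne'⟩, hdm, hdn⟩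
  · rintro ⟨-, hdm, hdn⟩
    exact ⟨Nat.dvd_gcd hdm hdn, Nat.gcd_ne_zero_left hm0.ne'⟩

lemma sum_dvd_le {S : Finset ℕ} {B r j e : ℕ} (hSB : ∀ p ∈ S, p ≤ B)
    (he : e ∈ Aset S B j) (hjr : j ≤ r) :
    ∑ m ∈ (Aset S B r).filter (fun m => e ∣ m), gfun m / m
      ≤ (gfun e / e) * ∑ m' ∈ Aset S B (r - j), gfun m' / m' := by
  obtain ⟨he0, heS, heΩ⟩ := (mem_Aset hSB).1 he
  have step1 : ∑ m ∈ (Aset S B r).filter (fun m => e ∣ m), gfun m / m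
      ≤ ∑ m ∈ (Aset S B r).filter (fun m => e ∣ m), (gfun e / e) * (gfun (m/e) / ((m/e : ℕ) : ℝ)) := by
    apply Finset.sum_le_sum
    intro m hm
    rw [Finset.mem_filter] at hm
    obtain ⟨hmA, hed⟩ := hm
    obtain ⟨hm0, hmS, hmΩ⟩ := (mem_Aset hSB).1 hmA
    have hq0 : 0 < m / e := Nat.div_pos (Nat.le_of_dvd hm0 hed) he0
    have hmske : m = e * (m / e) := (Nat.mul_div_cancel' hed).symm
    have hgle : gfun m ≤ gfun e * gfun (m / e) := by
      conv_lhs => rw [hmske]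
      exact gfun_mul_le e (m/e) he0.ne' hq0.ne'
    have hcast : (m:ℝ) = (e:ℝ) * ((m/e : ℕ):ℝ) := by
      rw [← Nat.cast_mul, ← hmske]
    rw [div_mul_div_comm, hcast]
    have hd0 : (0:ℝ) < (e:ℝ) * ((m/e : ℕ):ℝ) := by
      have h1 : (0:ℝ) < e := by exact_mod_cast he0
      have h2 : (0:ℝ) < ((m/e : ℕ):ℝ) := by exact_mod_cast hq0
      positivity
    exact (div_le_div_iff_of_pos_right hd0).2 hgle
  have hinjOn : ∀ m ∈ (Aset S B r).filter (fun m => e ∣ m),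
      ∀ m' ∈ (Aset S B r).filter (fun m => e ∣ m), m / e = m' / e → m = m' := by
    intro m hm m' hm' hmm
    rw [Finset.mem_filter] at hm hm'
    conv_lhs => rw [← Nat.mul_div_cancel' hm.2]
    conv_rhs => rw [← Nat.mul_div_cancel' hm'.2]
    rw [hmm]
  have step2 : ∑ m ∈ (Aset S B r).filter (fun m => e ∣ m),
          (gfun e / e) * (gfun (m/e) / ((m/e : ℕ) : ℝ))
      = ∑ m' ∈ ((Aset S B r).filter (fun m => e ∣ m)).image (fun m => m / e),
          (gfun e / e) * (gfun m' / m') :=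
    (Finset.sum_image (g := fun m => m / e) (f := fun m' => (gfun e / (e:ℝ)) * (gfun m' / m')) hinjOn).symm
  have hsub : ((Aset S B r).filter (fun m => e ∣ m)).image (fun m => m / e)
      ⊆ Aset S B (r - j) := by
    intro y hy
    rw [Finset.mem_image] at hy
    obtain ⟨m, hm, rfl⟩ := hy
    rw [Finset.mem_filter] at hm
    obtain ⟨hmA, hed⟩ := hm
    obtain ⟨hm0, hmS, hmΩ⟩ := (mem_Aset hSB).1 hmA
    have hq0 : 0 < m / e := Nat.div_pos (Nat.le_of_dvd hm0 hed) he0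
    rw [mem_Aset hSB]
    refine ⟨hq0, fun q hq => hmS (Nat.primeFactors_mono (Nat.div_dvd_of_dvd hed) hm0.ne' hq), ?_⟩
    have : Ω m = Ω e + Ω (m / e) := by
      conv_lhs => rw [← Nat.mul_div_cancel' hed]
      exact cardFactors_mul he0.ne' hq0.ne'
    omega
  have step3 : ∑ m' ∈ ((Aset S B r).filter (fun m => e ∣ m)).image (fun m => m / e),
          (gfun e / e) * (gfun m' / m')
      ≤ ∑ m' ∈ Aset S B (r - j), (gfun e / e) * (gfun m' / m') := by
    apply Finset.sum_le_sum_of_subset_of_nonneg hsub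
    intro m' hm' _
    have h1 := gfun_pos e
    have h2 := gfun_pos m'
    have h3 : (0:ℝ) ≤ (e:ℝ) := Nat.cast_nonneg e
    have h4 : (0:ℝ) ≤ (m':ℝ) := Nat.cast_nonneg m'
    positivity
  calc ∑ m ∈ (Aset S B r).filter (fun m => e ∣ m), gfun m / m
      ≤ ∑ m ∈ (Aset S B r).filter (fun m => e ∣ m),
          (gfun e / e) * (gfun (m/e) / ((m/e : ℕ) : ℝ)) := step1
    _ = ∑ m' ∈ ((Aset S B r).filter (fun m => e ∣ m)).image (fun m => m / e),
          (gfun e / e) * (gfun m' / m') := step2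
    _ ≤ ∑ m' ∈ Aset S B (r - j), (gfun e / e) * (gfun m' / m') := step3
    _ = (gfun e / e) * ∑ m' ∈ Aset S B (r - j), gfun m' / m' := by rw [← Finset.mul_sum]


lemma main_bound {S : Finset ℕ} {B r : ℕ} (hSp : ∀ p ∈ S, p.Prime)
    (hSB : ∀ p ∈ S, p ≤ B) (hB : 1 ≤ B) :
    ∑ m ∈ Aset S B r, ∑ n ∈ Aset S B r,
      ((r.factorial : ℝ)^2 * gfun m * gfun n / (Nat.lcm m n : ℝ))
    ≤ 2^r * (r.factorial : ℝ) * (∑ p ∈ S, (1:ℝ)/p)^r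
        * Real.exp (∑ p ∈ S, (1:ℝ)/p) := by
  set E := ∑ p ∈ S, (1:ℝ)/p with hE
  have hE0 : 0 ≤ E := Finset.sum_nonneg fun p _ => by positivity
  set A := Aset S B r with hA
  set D := Dset S B r with hD
  set x : ℕ → ℝ := fun m => gfun m / m with hx
  have hx0 : ∀ m, 0 ≤ x m := fun m => by
    have := (gfun_pos m).le
    have : (0:ℝ) ≤ m := Nat.cast_nonneg m
    rw [hx]; positivity
  set G : ℕ → ℕ → ℕ → ℝ := fun d m n =>
    if d ∣ m ∧ d ∣ n then (d:ℝ) * ((r.factorial:ℝ)^2 * (x m * x n)) else 0 with hG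
  -- Step 1 : per-pair bound by divisor sums
  have pair_bound : ∀ m ∈ A, ∀ n ∈ A,
      (r.factorial : ℝ)^2 * gfun m * gfun n / (Nat.lcm m n : ℝ) ≤ ∑ d ∈ D, G d m n := by
    intro m hm n hn
    obtain ⟨hm0, -, -⟩ := (mem_Aset hSB).1 hm
    obtain ⟨hn0, -, -⟩ := (mem_Aset hSB).1 hn
    have hm0' : (0:ℝ) < m := by exact_mod_cast hm0
    have hn0' : (0:ℝ) < n := by exact_mod_cast hn0
    have hgcd0 : 0 < Nat.gcd m n := Nat.gcd_pos_of_pos_left n hm0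
    have hlcm0 : 0 < Nat.lcm m n := Nat.lcm_pos hm0 hn0
    have hlcm0' : (0:ℝ) < (Nat.lcm m n : ℝ) := by exact_mod_cast hlcm0
    have hgl : (Nat.gcd m n : ℝ) * (Nat.lcm m n : ℝ) = (m:ℝ) * n := by
      rw [← Nat.cast_mul, Nat.gcd_mul_lcm, Nat.cast_mul]
    have hval : (r.factorial : ℝ)^2 * gfun m * gfun n / (Nat.lcm m n : ℝ)
        = (Nat.gcd m n : ℝ) * ((r.factorial:ℝ)^2 * (x m * x n)) := by
      rw [hx]
      simp only
      field_simp
      linear_combination (-(gfun m * gfun n)) * hgl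
    rw [hval]
    have htot : (Nat.gcd m n : ℝ) = ∑ d ∈ (Nat.gcd m n).divisors, (Nat.totient d : ℝ) := by
      rw [← Nat.cast_sum]
      exact_mod_cast (Nat.sum_totient (Nat.gcd m n)).symm
    rw [htot, Finset.sum_mul]
    have hfin : (Nat.gcd m n).divisors = D.filter (fun d => d ∣ m ∧ d ∣ n) :=
      divisors_gcd_eq hSB hB hm hn
    rw [hfin]
    rw [Finset.sum_filter]
    apply Finset.sum_le_sum
    intro d hd
    rw [hG]
    simp only
    split_ifs with hdc
    · apply mul_le_mul_of_nonneg_right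
      · exact_mod_cast Nat.totient_le d
      · exact mul_nonneg (by positivity) (mul_nonneg (hx0 m) (hx0 n))
    · exact le_refl 0
  -- Step 2 : swap sums and factor
  have step2 : ∑ m ∈ A, ∑ n ∈ A, ∑ d ∈ D, G d m n
      = ∑ d ∈ D, ((d:ℝ) * (r.factorial:ℝ)^2)
          * ((∑ m ∈ A.filter (fun m => d ∣ m), x m) * (∑ n ∈ A.filter (fun n => d ∣ n), x n)) := by
    rw [show ∑ m ∈ A, ∑ n ∈ A, ∑ d ∈ D, G d m n
        = ∑ d ∈ D, ∑ m ∈ A, ∑ n ∈ A, G d m n from by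
      rw [Finset.sum_congr rfl (fun m (_ : m ∈ A) => (Finset.sum_comm : ∑ n ∈ A, ∑ d ∈ D, G d m n = ∑ d ∈ D, ∑ n ∈ A, G d m n))]
      exact Finset.sum_comm]
    refine Finset.sum_congr rfl fun d _ => ?_
    have inner : ∀ m, ∑ n ∈ A, G d m n
        = if d ∣ m then ((d:ℝ) * (r.factorial:ℝ)^2 * x m) * ∑ n ∈ A.filter (fun n => d ∣ n), x n
          else 0 := by
      intro m
      by_cases hdm : d ∣ m
      · rw [if_pos hdm, hG]
        simp only [hdm, true_and]
        rw [Finset.mul_sum, ← Finset.sum_filter]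
        exact Finset.sum_congr rfl fun n _ => by ring
      · rw [if_neg hdm, hG]
        simp only [hdm, false_and, if_false]
        exact Finset.sum_const_zero
    rw [Finset.sum_congr rfl (fun m _ => inner m), ← Finset.sum_filter, ← Finset.sum_mul,
      ← Finset.mul_sum, mul_assoc]
  -- Step 3 : bound each d-term
  have step3 : ∀ d ∈ D, ((d:ℝ) * (r.factorial:ℝ)^2)
          * ((∑ m ∈ A.filter (fun m => d ∣ m), x m) * (∑ n ∈ A.filter (fun n => d ∣ n), x n))
      ≤ ((d:ℝ) * (r.factorial:ℝ)^2)
          * (((gfun d / d) * (E^(r - Ω d) / (Nat.factorial (r - Ω d))))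
            * ((gfun d / d) * (E^(r - Ω d) / (Nat.factorial (r - Ω d))))) := by
    intro d hd
    obtain ⟨hd0, hdS, hdr⟩ := (mem_Dset hSB hB).1 hd
    have hdA : d ∈ Aset S B (Ω d) := (mem_Aset hSB).2 ⟨hd0, hdS, rfl⟩
    have hW : ∑ m ∈ A.filter (fun m => d ∣ m), x m
        ≤ (gfun d / d) * (E^(r - Ω d) / (Nat.factorial (r - Ω d))) := by
      refine (sum_dvd_le hSB hdA hdr).trans ?_
      apply mul_le_mul_of_nonneg_left (sum_Aset_le hSp hSB _)
      have := (gfun_pos d).le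
      positivity
    have hW0 : 0 ≤ ∑ m ∈ A.filter (fun m => d ∣ m), x m :=
      Finset.sum_nonneg fun m _ => hx0 m
    have hC0 : (0:ℝ) ≤ (d:ℝ) * (r.factorial:ℝ)^2 := by positivity
    apply mul_le_mul_of_nonneg_left _ hC0
    exact mul_le_mul hW hW hW0 (le_trans hW0 hW)
  -- Step 4 : fiberwise grouping and final arithmetic
  have step4 : ∑ d ∈ D, ((d:ℝ) * (r.factorial:ℝ)^2)
          * (((gfun d / d) * (E^(r - Ω d) / (Nat.factorial (r - Ω d))))
            * ((gfun d / d) * (E^(r - Ω d) / (Nat.factorial (r - Ω d)))))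
      ≤ 2^r * (r.factorial : ℝ) * E^r * Real.exp E := by
    set H : ℕ → ℝ := fun d => ((d:ℝ) * (r.factorial:ℝ)^2)
          * (((gfun d / d) * (E^(r - Ω d) / (Nat.factorial (r - Ω d))))
            * ((gfun d / d) * (E^(r - Ω d) / (Nat.factorial (r - Ω d))))) with hH
    have hfib : ∑ d ∈ D, H d
        = ∑ j ∈ Finset.range (r+1), ∑ d ∈ D.filter (fun d => Ω d = j), H d := by
      rw [Finset.sum_fiberwise_of_maps_to]
      intro d hd
      obtain ⟨-, -, hdr⟩ := (mem_Dset hSB hB).1 hd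
      exact Finset.mem_range.2 (by omega)
    rw [hfib]
    have perj : ∀ j ∈ Finset.range (r+1),
        ∑ d ∈ D.filter (fun d => Ω d = j), H d
        ≤ 2^r * (r.factorial : ℝ) * E^r * (E^(r-j) / (Nat.factorial (r-j))) := by
      intro j hj
      have hjr : j ≤ r := by exact Finset.mem_range.1 hj |> Nat.lt_succ_iff.1
      rw [Dset_filter_eq hSB hB hjr]
      have hterm : ∀ d ∈ Aset S B j, H d
          ≤ ((r.factorial:ℝ)^2 * (E^(r-j) / (Nat.factorial (r-j)))^2) * (gfun d / d) := by
        intro d hd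
        obtain ⟨hd0, -, hdΩ⟩ := (mem_Aset hSB).1 hd
        have hd0' : (0:ℝ) < d := by exact_mod_cast hd0
        rw [hH]
        simp only [hdΩ]
        have hg0 := gfun_pos d
        have hg1 := gfun_le_one d
        have heq : ((d:ℝ) * (r.factorial:ℝ)^2)
            * (((gfun d / d) * (E^(r-j) / (Nat.factorial (r-j))))
              * ((gfun d / d) * (E^(r-j) / (Nat.factorial (r-j)))))
            = ((r.factorial:ℝ)^2 * (E^(r-j) / (Nat.factorial (r-j)))^2)
              * (gfun d * gfun d / d) := by
          field_simp
        rw [heq]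
        apply mul_le_mul_of_nonneg_left _ (by positivity)
        apply (div_le_div_iff_of_pos_right hd0').2
        nlinarith
      have hsum : ∑ d ∈ Aset S B j, H d
          ≤ ((r.factorial:ℝ)^2 * (E^(r-j) / (Nat.factorial (r-j)))^2) * (E^j / (Nat.factorial j)) := by
        refine (Finset.sum_le_sum hterm).trans ?_
        rw [← Finset.mul_sum]
        apply mul_le_mul_of_nonneg_left (sum_Aset_le hSp hSB j) (by positivity)
      refine hsum.trans ?_
      -- coefficient inequality
      have hchoose : r.choose j ≤ 2^r := by
        calc r.choose j ≤ ∑ i ∈ Finset.range (r+1), r.choose i :=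
              Finset.single_le_sum (fun i _ => Nat.zero_le _) (Finset.mem_range.2 (by omega))
          _ = 2^r := Nat.sum_range_choose r
      have hnat : (r.factorial : ℝ) ≤ 2^r * ((j.factorial : ℝ) * ((r-j).factorial : ℝ)) := by
        have h2 : r.factorial ≤ 2^r * (j.factorial * (r-j).factorial) := by
          calc r.factorial = r.choose j * j.factorial * (r-j).factorial :=
                (Nat.choose_mul_factorial_mul_factorial hjr).symm
            _ = r.choose j * (j.factorial * (r-j).factorial) := by ring
            _ ≤ 2^r * (j.factorial * (r-j).factorial) :=
                Nat.mul_le_mul_right _ hchoose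
        exact_mod_cast h2
      set a := (r.factorial : ℝ) with ha
      set b := ((r-j).factorial : ℝ) with hb
      set c := ((j).factorial : ℝ) with hc
      have hb0 : (0:ℝ) < b := by rw [hb]; exact_mod_cast Nat.factorial_pos _
      have hc0 : (0:ℝ) < c := by rw [hc]; exact_mod_cast Nat.factorial_pos _
      have ha0 : (0:ℝ) < a := by rw [ha]; exact_mod_cast Nat.factorial_pos _
      have hE2 : (E^(r-j))^2 * E^j = E^r * E^(r-j) := by
        rw [← pow_mul, ← pow_add, ← pow_add]
        congr 1
        omega
      have coeff : a^2/(b^2*c) ≤ 2^r*a/b := by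
        rw [div_le_div_iff₀ (by positivity) hb0]
        nlinarith [mul_le_mul_of_nonneg_left hnat (mul_nonneg ha0.le hb0.le)]
      calc a^2 * (E^(r-j)/b)^2 * (E^j/c)
          = (a^2/(b^2*c)) * ((E^(r-j))^2 * E^j) := by ring
        _ = (a^2/(b^2*c)) * (E^r * E^(r-j)) := by rw [hE2]
        _ ≤ (2^r*a/b) * (E^r * E^(r-j)) := mul_le_mul_of_nonneg_right coeff (by positivity)
        _ = 2^r * a * E^r * (E^(r-j)/b) := by ring
    refine (Finset.sum_le_sum perj).trans ?_
    rw [← Finset.mul_sum]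
    have hrefl : ∑ j ∈ Finset.range (r+1), E^(r-j) / (Nat.factorial (r-j) : ℝ)
        = ∑ k ∈ Finset.range (r+1), E^k / (Nat.factorial k : ℝ) := by
      have := Finset.sum_range_reflect (fun k => E^k / (Nat.factorial k : ℝ)) (r+1)
      simpa using this
    rw [hrefl]
    apply mul_le_mul_of_nonneg_left (Real.sum_le_exp_of_nonneg hE0 (r+1)) (by positivity)
  calc ∑ m ∈ A, ∑ n ∈ A, ((r.factorial : ℝ)^2 * gfun m * gfun n / (Nat.lcm m n : ℝ))
      ≤ ∑ m ∈ A, ∑ n ∈ A, ∑ d ∈ D, G d m n := by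
        apply Finset.sum_le_sum
        intro m hm
        exact Finset.sum_le_sum fun n hn => pair_bound m hm n hn
    _ = ∑ d ∈ D, ((d:ℝ) * (r.factorial:ℝ)^2)
          * ((∑ m ∈ A.filter (fun m => d ∣ m), x m) * (∑ n ∈ A.filter (fun n => d ∣ n), x n)) := step2
    _ ≤ ∑ d ∈ D, ((d:ℝ) * (r.factorial:ℝ)^2)
          * (((gfun d / d) * (E^(r - Ω d) / (Nat.factorial (r - Ω d))))
            * ((gfun d / d) * (E^(r - Ω d) / (Nat.factorial (r - Ω d))))) :=
        Finset.sum_le_sum step3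
    _ ≤ 2^r * (r.factorial : ℝ) * E^r * Real.exp E := step4


/-- For `2 ≤ P ≤ Q` and `r : ℕ`:
`Σ_{m,n : p ∣ mn → P ≤ p < Q, Ω(m) = Ω(n) = r} (r!)² g(m) g(n) / [m,n] ≤ 2^r r! 𝑃^r e^𝑃`. -/
theorem g_lcm_double_sum_bound (P Q : ℝ) (hP : 2 ≤ P) (hPQ : P ≤ Q) (r : ℕ) :
    (∑' mn : ℕ × ℕ,
        if 0 < mn.1 ∧ 0 < mn.2
            ∧ (∀ p : ℕ, p.Prime → p ∣ mn.1 → (P ≤ (p:ℝ) ∧ (p:ℝ) < Q))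
            ∧ (∀ p : ℕ, p.Prime → p ∣ mn.2 → (P ≤ (p:ℝ) ∧ (p:ℝ) < Q))
            ∧ Ω mn.1 = r ∧ Ω mn.2 = r
        then (Nat.factorial r : ℝ)^2 * gfun mn.1 * gfun mn.2 / (Nat.lcm mn.1 mn.2 : ℝ)
        else 0)
      ≤ 2^r * (Nat.factorial r : ℝ) * (primeRecipSum P Q)^r * Real.exp (primeRecipSum P Q) := by
  set B : ℕ := ⌈Q⌉₊ with hB'
  set S : Finset ℕ :=
    (Finset.range (B + 1)).filter (fun p : ℕ => p.Prime ∧ P ≤ (p:ℝ) ∧ (p:ℝ) < Q) with hS'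
  have hSp : ∀ p ∈ S, p.Prime := fun p hp => ((Finset.mem_filter.1 hp).2).1
  have hSB : ∀ p ∈ S, p ≤ B := fun p hp =>
    Nat.lt_succ_iff.1 (Finset.mem_range.1 (Finset.mem_filter.1 hp).1)
  have hQ0 : (0:ℝ) < Q := by linarith
  have hB : 1 ≤ B := Nat.one_le_ceil_iff.2 hQ0
  have hEdef : primeRecipSum P Q = ∑ p ∈ S, (1:ℝ)/p := rfl
  have hcond : ∀ m : ℕ, 0 < m →
      ((∀ p : ℕ, p.Prime → p ∣ m → (P ≤ (p:ℝ) ∧ (p:ℝ) < Q)) ↔ m.primeFactors ⊆ S) := by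
    intro m hm0
    constructor
    · intro h p hp
      obtain ⟨pp, pd, -⟩ := Nat.mem_primeFactors.1 hp
      obtain ⟨h1, h2⟩ := h p pp pd
      rw [hS', Finset.mem_filter, Finset.mem_range]
      refine ⟨?_, pp, h1, h2⟩
      have : (p:ℝ) < (B:ℝ) := lt_of_lt_of_le h2 (Nat.le_ceil Q)
      have : p < B := by exact_mod_cast this
      omega
    · intro h p pp pd
      have hp : p ∈ m.primeFactors := Nat.mem_primeFactors.2 ⟨pp, pd, hm0.ne'⟩
      have := h hp
      rw [hS', Finset.mem_filter] at this
      exact ⟨this.2.2.1, this.2.2.2⟩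
  set f : ℕ × ℕ → ℝ := fun mn =>
    if 0 < mn.1 ∧ 0 < mn.2
        ∧ (∀ p : ℕ, p.Prime → p ∣ mn.1 → (P ≤ (p:ℝ) ∧ (p:ℝ) < Q))
        ∧ (∀ p : ℕ, p.Prime → p ∣ mn.2 → (P ≤ (p:ℝ) ∧ (p:ℝ) < Q))
        ∧ Ω mn.1 = r ∧ Ω mn.2 = r
    then (Nat.factorial r : ℝ)^2 * gfun mn.1 * gfun mn.2 / (Nat.lcm mn.1 mn.2 : ℝ)
    else 0 with hf
  have hsupp : ∀ mn : ℕ × ℕ, mn ∉ (Aset S B r) ×ˢ (Aset S B r) → f mn = 0 := by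
    intro mn hmn
    rw [hf]
    simp only
    split_ifs with hC
    · exfalso
      apply hmn
      obtain ⟨h1, h2, h3, h4, h5, h6⟩ := hC
      rw [Finset.mem_product]
      exact ⟨(mem_Aset hSB).2 ⟨h1, (hcond _ h1).1 h3, h5⟩,
        (mem_Aset hSB).2 ⟨h2, (hcond _ h2).1 h4, h6⟩⟩
    · rfl
  rw [show (∑' mn : ℕ × ℕ,
      if 0 < mn.1 ∧ 0 < mn.2
          ∧ (∀ p : ℕ, p.Prime → p ∣ mn.1 → (P ≤ (p:ℝ) ∧ (p:ℝ) < Q))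
          ∧ (∀ p : ℕ, p.Prime → p ∣ mn.2 → (P ≤ (p:ℝ) ∧ (p:ℝ) < Q))
          ∧ Ω mn.1 = r ∧ Ω mn.2 = r
      then (Nat.factorial r : ℝ)^2 * gfun mn.1 * gfun mn.2 / (Nat.lcm mn.1 mn.2 : ℝ)
      else 0) = ∑' mn : ℕ × ℕ, f mn from rfl]
  rw [tsum_eq_sum hsupp, Finset.sum_product]
  have hval : ∀ m ∈ Aset S B r, ∀ n ∈ Aset S B r,
      f (m, n) = (Nat.factorial r : ℝ)^2 * gfun m * gfun n / (Nat.lcm m n : ℝ) := by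
    intro m hm n hn
    obtain ⟨hm0, hmS, hmΩ⟩ := (mem_Aset hSB).1 hm
    obtain ⟨hn0, hnS, hnΩ⟩ := (mem_Aset hSB).1 hn
    rw [hf]
    simp only
    rw [if_pos]
    exact ⟨hm0, hn0, (hcond _ hm0).2 hmS, (hcond _ hn0).2 hnS, hmΩ, hnΩ⟩
  rw [Finset.sum_congr rfl (fun m hm => Finset.sum_congr rfl (fun n hn => hval m hm n hn))]
  rw [hEdef]
  exact main_bound hSp hSB hB
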